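/- arXiv:2409.03953 — 4 statements merged into one kernel-verified Lean document; each statement's English description precedes it below -/
import Mathlib

section
/- Let N, p, m be positive integers, let J be a real N×p matrix (the Jacobian on the N training inputs), J' a real m×p matrix (the Jacobian on m test inputs), f₀ ∈ ℝ^N and f₀' ∈ ℝ^m (the network's initial predictions on training and test inputs), y ∈ ℝ^N the training targets, and let α > 0, β > 0. Set K = J Jᵀ and K' = J' Jᵀ. Suppose θ : ℝ → ℝ^p is differentiable, satisfies θ(0) = 0, and obeys the gradient flow of the regularized mean squared error loss, θ'(t) = −α·[(2/N)·Jᵀ(J θ(t) + f₀ − y) + 2β·θ(t)] for all t ≥ 0. Then the test predictions of the linearized model converge: f₀' + J' θ(t) tends, as t → ∞, to f₀' + K'(K + Nβ·I_N)⁻¹(y − f₀), i.e. to the posterior mean of the Gaussian process with kernel K and aleatoric noise σ² = Nβ. -/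
open Matrix Filter


lemma aux_posdef {a b : ℕ} (A : Matrix (Fin a) (Fin b) ℝ) {c : ℝ} (hc : 0 < c) :
    (Aᵀ * A + c • (1 : Matrix (Fin b) (Fin b) ℝ)).PosDef := by
  rw [posDef_iff_dotProduct_mulVec]
  constructor
  · simp [Matrix.IsHermitian, conjTranspose_add, conjTranspose_mul, conjTranspose_smul,
      conjTranspose_one]
  · intro x hx
    have h1 : star x ⬝ᵥ ((Aᵀ * A + c • (1 : Matrix (Fin b) (Fin b) ℝ)) *ᵥ x)
        = (A *ᵥ x) ⬝ᵥ (A *ᵥ x) + c * (x ⬝ᵥ x) := by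
      simp [add_mulVec, dotProduct_add, smul_mulVec, one_mulVec, dotProduct_smul,
        ← mulVec_mulVec, mulVec_transpose, dotProduct_mulVec, smul_eq_mul]
      rw [dotProduct_comm]
    rw [h1]
    have h2 : (0:ℝ) ≤ (A *ᵥ x) ⬝ᵥ (A *ᵥ x) := by
      simpa using dotProduct_self_star_nonneg (A *ᵥ x)
    have h3 : (0:ℝ) < x ⬝ᵥ x := by
      simpa using dotProduct_self_star_pos_iff.mpr hx
    positivity


/-- Gradient flow on the regularized MSE loss of the linearized (NTK-regime) network:
the test predictions `f₀' + J' θ(t)` converge to the NTK-GP posterior mean with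
aleatoric noise `σ² = Nβ`. -/
theorem ntk_gradient_flow_test_predictions_tendsto_posterior_mean
    (N p m : ℕ) (hN : 0 < N) (hp : 0 < p) (hm : 0 < m)
    (J : Matrix (Fin N) (Fin p) ℝ) (J' : Matrix (Fin m) (Fin p) ℝ)
    (f₀ y : Fin N → ℝ) (f₀' : Fin m → ℝ)
    (α β : ℝ) (hα : 0 < α) (hβ : 0 < β)
    (θ : ℝ → (Fin p → ℝ))
    (hθdiff : Differentiable ℝ θ)
    (hθ0 : θ 0 = 0)
    (hode : ∀ t : ℝ, 0 ≤ t →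
      HasDerivAt θ
        (-α • (((2 : ℝ) / (N : ℝ)) • (Jᵀ *ᵥ (J *ᵥ θ t + f₀ - y)) + (2 * β) • θ t)) t) :
    Tendsto (fun t : ℝ => f₀' + J' *ᵥ θ t) atTop
      (nhds (f₀' + ((J' * Jᵀ) * (J * Jᵀ + ((N : ℝ) * β) • (1 : Matrix (Fin N) (Fin N) ℝ))⁻¹)
        *ᵥ (y - f₀))) := by
  have hNR : (0:ℝ) < (N:ℝ) := by exact_mod_cast hN
  set c : ℝ := (N : ℝ) * β with hc_def
  have hc : 0 < c := by positivity
  set B : Matrix (Fin p) (Fin p) ℝ := Jᵀ * J + c • 1 with hB_def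
  set C : Matrix (Fin N) (Fin N) ℝ := J * Jᵀ + c • 1 with hC_def
  have hBpd : B.PosDef := aux_posdef J hc
  have hCpd : C.PosDef := by
    have := aux_posdef Jᵀ hc
    rwa [transpose_transpose] at this
  have hBunit : IsUnit B.det := (Matrix.isUnit_iff_isUnit_det B).mp hBpd.isUnit
  have hCunit : IsUnit C.det := (Matrix.isUnit_iff_isUnit_det C).mp hCpd.isUnit
  set θs : Fin p → ℝ := B⁻¹ *ᵥ (Jᵀ *ᵥ (y - f₀)) with hθs_def
  -- fixed point identity
  have hfix : B *ᵥ θs = Jᵀ *ᵥ (y - f₀) := by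
    rw [hθs_def, mulVec_mulVec, Matrix.mul_nonsing_inv _ hBunit, one_mulVec]
  -- push-through identity for the target
  have hpush : ((J' * Jᵀ) * C⁻¹) *ᵥ (y - f₀) = J' *ᵥ θs := by
    have hkey : Jᵀ * C = B * Jᵀ := by
      rw [hB_def, hC_def]
      simp only [Matrix.mul_add, Matrix.add_mul, Matrix.mul_smul, Matrix.smul_mul,
        Matrix.mul_one, Matrix.one_mul, Matrix.mul_assoc]
    have h2 : B⁻¹ * Jᵀ = Jᵀ * C⁻¹ := by
      calc B⁻¹ * Jᵀ = B⁻¹ * Jᵀ * (C * C⁻¹) := by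
            rw [Matrix.mul_nonsing_inv _ hCunit, Matrix.mul_one]
        _ = B⁻¹ * (Jᵀ * C) * C⁻¹ := by simp only [Matrix.mul_assoc]
        _ = B⁻¹ * (B * Jᵀ) * C⁻¹ := by rw [hkey]
        _ = Jᵀ * C⁻¹ := by
            rw [← Matrix.mul_assoc, Matrix.nonsing_inv_mul _ hBunit, Matrix.one_mul]
    rw [hθs_def, mulVec_mulVec, mulVec_mulVec, Matrix.mul_assoc J' B⁻¹ Jᵀ, h2,
      ← Matrix.mul_assoc]
  -- the shifted trajectory
  set φ : ℝ → (Fin p → ℝ) := fun t => θ t - θs with hφ_def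
  have hφdiff : Differentiable ℝ φ := hθdiff.sub_const _
  have hφode : ∀ t : ℝ, 0 ≤ t →
      HasDerivAt φ ((-(2 * α / (N:ℝ))) • (B *ᵥ φ t)) t := by
    intro t ht
    have h := (hode t ht).sub_const θs
    refine h.congr_deriv ?_
    have hBv : B *ᵥ φ t = (Jᵀ * J) *ᵥ θ t + c • θ t - Jᵀ *ᵥ (y - f₀) := by
      rw [hφ_def]
      simp only [mulVec_sub, hfix]; simp only [hB_def, add_mulVec, smul_mulVec, one_mulVec]
    rw [hBv]
    have hJv : Jᵀ *ᵥ (J *ᵥ θ t + f₀ - y) = (Jᵀ * J) *ᵥ θ t - Jᵀ *ᵥ (y - f₀) := by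
      rw [← mulVec_mulVec, ← mulVec_sub]
      congr 1
      abel
    rw [hJv]
    have hNne : (N:ℝ) ≠ 0 := hNR.ne'
    match_scalars <;> field_simp [hNne, hc_def] <;> ring
  set k : ℝ := 4 * α * β with hk_def
  have hk : 0 < k := by positivity
  set V : ℝ → ℝ := fun t => φ t ⬝ᵥ φ t with hV_def
  have hVnonneg : ∀ t, 0 ≤ V t := fun t => by
    simpa using dotProduct_self_star_nonneg (φ t)
  have hcoord : ∀ (t : ℝ) (d : Fin p → ℝ), HasDerivAt φ d t →
      ∀ i, HasDerivAt (fun s => φ s i) (d i) t := fun t d hd => hasDerivAt_pi.mp hd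
  have hVd : ∀ (t : ℝ) (d : Fin p → ℝ), HasDerivAt φ d t →
      HasDerivAt V (2 * (φ t ⬝ᵥ d)) t := by
    intro t d hd
    have h1 := hcoord t d hd
    have h2 : HasDerivAt (fun s => ∑ i, φ s i * φ s i)
        (∑ i : Fin p, (d i * φ t i + φ t i * d i)) t :=
      HasDerivAt.fun_sum (fun i _ => (h1 i).mul (h1 i))
    have h3 : (∑ i : Fin p, (d i * φ t i + φ t i * d i)) = 2 * (φ t ⬝ᵥ d) := by
      simp only [dotProduct, Finset.mul_sum, Finset.sum_add_distrib]
      rw [← Finset.sum_add_distrib]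
      exact Finset.sum_congr rfl fun i _ => by ring
    rw [← h3]
    exact h2
  have hVdiff : Differentiable ℝ V := by
    intro t
    exact (hVd t _ (hφdiff t).hasDerivAt).differentiableAt
  have hquad : ∀ v : Fin p → ℝ, c * (v ⬝ᵥ v) ≤ v ⬝ᵥ (B *ᵥ v) := by
    intro v
    have heq : v ⬝ᵥ (B *ᵥ v) = (J *ᵥ v) ⬝ᵥ (J *ᵥ v) + c * (v ⬝ᵥ v) := by
      simp only [hB_def, add_mulVec, dotProduct_add, smul_mulVec, one_mulVec,
        dotProduct_smul, ← mulVec_mulVec, mulVec_transpose, dotProduct_mulVec, smul_eq_mul]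
      rw [dotProduct_comm]
    have h2 : (0:ℝ) ≤ (J *ᵥ v) ⬝ᵥ (J *ᵥ v) := by
      simpa using dotProduct_self_star_nonneg (J *ᵥ v)
    linarith
  set W : ℝ → ℝ := fun t => V t * Real.exp (k * t) with hW_def
  have hWdiff : Differentiable ℝ W :=
    hVdiff.mul ((Real.differentiable_exp.comp ((differentiable_const k).mul differentiable_id)))
  have hWanti : AntitoneOn W (Set.Ici 0) := by
    apply antitoneOn_of_deriv_nonpos (convex_Ici 0) hWdiff.continuous.continuousOn
      hWdiff.differentiableOn
    intro x hx
    rw [interior_Ici] at hx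
    have hx0 : (0:ℝ) ≤ x := le_of_lt hx
    have hdφ := hφode x hx0
    have hdV := hVd x _ hdφ
    have hdE : HasDerivAt (fun t => Real.exp (k * t)) (Real.exp (k * x) * k) x := by
      simpa using ((hasDerivAt_id x).const_mul k).exp
    have hdW : HasDerivAt W
        (2 * (φ x ⬝ᵥ ((-(2 * α / (N:ℝ))) • (B *ᵥ φ x))) * Real.exp (k * x)
          + V x * (Real.exp (k * x) * k)) x := hdV.mul hdE
    rw [hdW.deriv]
    have he : (0:ℝ) < Real.exp (k * x) := Real.exp_pos _
    have hdot : φ x ⬝ᵥ ((-(2 * α / (N:ℝ))) • (B *ᵥ φ x))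
        = (-(2 * α / (N:ℝ))) * (φ x ⬝ᵥ (B *ᵥ φ x)) := by
      simp [dotProduct_smul, smul_eq_mul]
    rw [hdot]
    have hq := hquad (φ x)
    have hkc : (4 * α / (N:ℝ)) * c = k := by
      rw [hc_def, hk_def]; field_simp
    have hVx := hVnonneg x
    have hVxeq : V x = φ x ⬝ᵥ φ x := rfl
    have hmain : 2 * ((-(2 * α / (N:ℝ))) * (φ x ⬝ᵥ (B *ᵥ φ x))) + V x * k ≤ 0 := by
      have h4 : (0:ℝ) < 4 * α / (N:ℝ) := by positivity
      have h6 := mul_le_mul_of_nonneg_left hq (le_of_lt h4)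
      have h7 : V x * k = 4 * α / (N:ℝ) * (c * (φ x ⬝ᵥ φ x)) := by
        rw [hVxeq, ← hkc]; ring
      have g : 2 * ((-(2 * α / (N:ℝ))) * (φ x ⬝ᵥ (B *ᵥ φ x)))
          = -(4 * α / (N:ℝ) * (φ x ⬝ᵥ (B *ᵥ φ x))) := by ring
      rw [g, h7]
      linarith [h6]
    have h9 := mul_le_mul_of_nonneg_right hmain (le_of_lt he)
    have h10 : 2 * ((-(2 * α / (N:ℝ))) * (φ x ⬝ᵥ (B *ᵥ φ x))) * Real.exp (k * x)
        + V x * (Real.exp (k * x) * k)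
        = (2 * ((-(2 * α / (N:ℝ))) * (φ x ⬝ᵥ (B *ᵥ φ x))) + V x * k) * Real.exp (k * x) := by
      ring
    rw [h10]
    linarith [h9]
  have hbound : ∀ t, 0 ≤ t → V t ≤ V 0 * Real.exp (-(k * t)) := by
    intro t ht
    have hW0 : W t ≤ W 0 := hWanti Set.self_mem_Ici (Set.mem_Ici.mpr ht) ht
    rw [hW_def] at hW0
    simp only [mul_zero, Real.exp_zero, mul_one] at hW0
    have := mul_le_mul_of_nonneg_right hW0 (Real.exp_pos (-(k * t))).le
    calc V t = V t * Real.exp (k * t) * Real.exp (-(k * t)) := by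
          rw [mul_assoc, ← Real.exp_add]; simp
      _ ≤ V 0 * Real.exp (-(k * t)) := this
  have hVto : Tendsto V atTop (nhds 0) := by
    have hupper : Tendsto (fun t => V 0 * Real.exp (-(k * t))) atTop (nhds 0) := by
      have h1 : Tendsto (fun t : ℝ => k * t) atTop atTop :=
        tendsto_id.const_mul_atTop hk
      have h2 : Tendsto (fun t : ℝ => Real.exp (-(k * t))) atTop (nhds 0) :=
        Real.tendsto_exp_neg_atTop_nhds_zero.comp h1
      simpa using h2.const_mul (V 0)
    refine tendsto_of_tendsto_of_tendsto_of_le_of_le' tendsto_const_nhds hupper ?_ ?_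
    · exact Eventually.of_forall hVnonneg
    · exact (eventually_ge_atTop 0).mono hbound
  have hφto : Tendsto φ atTop (nhds 0) := by
    rw [tendsto_pi_nhds]
    intro i
    have hsq : Tendsto (fun t => φ t i * φ t i) atTop (nhds 0) := by
      refine tendsto_of_tendsto_of_tendsto_of_le_of_le' tendsto_const_nhds hVto ?_ ?_
      · exact Eventually.of_forall fun t => mul_self_nonneg _
      · refine Eventually.of_forall fun t => ?_
        have : φ t i * φ t i ≤ ∑ j : Fin p, φ t j * φ t j :=
          Finset.single_le_sum (fun j _ => mul_self_nonneg (φ t j)) (Finset.mem_univ i)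
        exact this
    have habs : Tendsto (fun t => |φ t i|) atTop (nhds 0) := by
      have h1 : Tendsto (fun t => Real.sqrt (φ t i * φ t i)) atTop (nhds 0) := by
        simpa [Function.comp_def] using (Real.continuous_sqrt.tendsto 0).comp hsq
      simpa [Real.sqrt_mul_self_eq_abs] using h1
    have h2 := (tendsto_zero_iff_abs_tendsto_zero (fun t => φ t i)).mpr habs
    simpa using h2
  have hθto : Tendsto θ atTop (nhds θs) := by
    have h1 := hφto.add_const θs
    simp only [hφ_def, zero_add] at h1
    convert h1 using 2 with t
    · abel
  have hcontJ : Continuous fun v : Fin p → ℝ => J' *ᵥ v := by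
    exact continuous_const.matrix_mulVec continuous_id
  have hcontF : Continuous fun v : Fin p → ℝ => f₀' + J' *ᵥ v :=
    continuous_const.add hcontJ
  have hfinal := (hcontF.tendsto θs).comp hθto
  rw [hpush]
  exact hfinal
end

section
/- Let N be a positive integer, K a real symmetric positive semidefinite N×N matrix, f₀, y ∈ ℝ^N, α > 0, β > 0, and define f(t) = f₀ + (I_N − exp(−(2α/N)·t·(K + Nβ·I_N)))·(K + Nβ·I_N)⁻¹ K (y − f₀). Then as t → ∞, f(t) converges to f₀ + K (K + Nβ·I_N)⁻¹ (y − f₀), the NTK-GP posterior mean on the training inputs with aleatoric noise σ² = Nβ. -/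
open Matrix Filter

/-- The training-data gradient-flow solution converges, as `t → ∞`, to the NTK-GP
posterior mean `f₀ + K(K + Nβ I)⁻¹(y − f₀)` on the training inputs. -/
theorem training_dynamics_tendsto_posterior_mean
    (N : ℕ) (hN : 0 < N)
    (K : Matrix (Fin N) (Fin N) ℝ) (hKsymm : K.IsSymm) (hKpsd : K.PosSemidef)
    (f₀ y : Fin N → ℝ) (α β : ℝ) (hα : 0 < α) (hβ : 0 < β)
    (f : ℝ → (Fin N → ℝ))
    (hf : ∀ t : ℝ, f t = f₀ +
      (((1 : Matrix (Fin N) (Fin N) ℝ)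
          - NormedSpace.exp ((-(2 * α / (N : ℝ) * t))
              • (K + ((N : ℝ) * β) • (1 : Matrix (Fin N) (Fin N) ℝ))))
        * (K + ((N : ℝ) * β) • (1 : Matrix (Fin N) (Fin N) ℝ))⁻¹ * K) *ᵥ (y - f₀)) :
    Tendsto f atTop
      (nhds (f₀ + (K * (K + ((N : ℝ) * β) • (1 : Matrix (Fin N) (Fin N) ℝ))⁻¹) *ᵥ (y - f₀))) := by
  set A : Matrix (Fin N) (Fin N) ℝ := K + ((N : ℝ) * β) • 1 with hAdef
  have hc : (0:ℝ) < 2 * α / (N:ℝ) := by positivity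
  set c : ℝ := 2 * α / (N:ℝ)
  have hsmul : (((N : ℝ) * β) • (1 : Matrix (Fin N) (Fin N) ℝ)).PosDef := by
    rw [smul_one_eq_diagonal]
    exact Matrix.PosDef.diagonal fun i => by positivity
  have hA : A.PosDef := Matrix.PosDef.posSemidef_add hKpsd hsmul
  have hAH : A.IsHermitian := hA.isHermitian
  have hAdet : IsUnit A.det := hA.det_pos.ne'.isUnit
  have hcomm : A⁻¹ * K = K * A⁻¹ := by
    have h1 : K * A = A * K := by
      simp [hAdef, mul_add, add_mul, Matrix.mul_smul, Matrix.smul_mul]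
    calc A⁻¹ * K = A⁻¹ * K * (A * A⁻¹) := by
          rw [Matrix.mul_nonsing_inv _ hAdet, mul_one]
      _ = A⁻¹ * (K * A) * A⁻¹ := by simp only [mul_assoc]
      _ = A⁻¹ * A * (K * A⁻¹) := by rw [h1]; simp only [mul_assoc]
      _ = K * A⁻¹ := by rw [Matrix.nonsing_inv_mul _ hAdet, one_mul]
  set U : Matrix (Fin N) (Fin N) ℝ := (hAH.eigenvectorUnitary : Matrix (Fin N) (Fin N) ℝ)
  have hU : IsUnit U := (Unitary.toUnits hAH.eigenvectorUnitary).isUnit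
  set d : Fin N → ℝ := hAH.eigenvalues
  have hd : ∀ i, 0 < d i := hA.eigenvalues_pos
  have hUinv : U⁻¹ = star U := by
    exact Matrix.inv_eq_left_inv (Matrix.UnitaryGroup.star_mul_self hAH.eigenvectorUnitary)
  have hspec : A = U * diagonal d * star U := by
    have := hAH.spectral_theorem
    simpa using this
  have hexp : ∀ t : ℝ, NormedSpace.exp ((-(c * t)) • A)
      = U * diagonal (fun i => Real.exp (-(c * t) * d i)) * star U := by
    intro t
    have h1 : (-(c * t)) • A = U * ((-(c * t)) • diagonal d) * U⁻¹ := by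
      rw [hUinv, hspec]
      simp [Matrix.smul_mul, Matrix.mul_smul]
    rw [h1, Matrix.exp_conj U _ hU, hUinv]
    have hsd : (-(c * t)) • (diagonal d : Matrix (Fin N) (Fin N) ℝ)
        = diagonal (fun i => -(c * t) * d i) := by
      rw [← Matrix.diagonal_smul]
      rfl
    rw [hsd, Matrix.exp_diagonal, Pi.exp_def]
    simp only [← Real.exp_eq_exp_ℝ]
  -- convergence of the exponential to 0
  have hE : Tendsto (fun t : ℝ => NormedSpace.exp ((-(c * t)) • A)) atTop
      (nhds (0 : Matrix (Fin N) (Fin N) ℝ)) := by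
    have hdiag : Tendsto (fun t : ℝ => (fun i => Real.exp (-(c * t) * d i))) atTop
        (nhds (0 : Fin N → ℝ)) := by
      rw [tendsto_pi_nhds]
      intro i
      have h2 : Tendsto (fun t : ℝ => (c * d i) * t) atTop atTop :=
        Tendsto.const_mul_atTop (mul_pos hc (hd i)) tendsto_id
      have h3 : Tendsto (fun t : ℝ => -(c * t) * d i) atTop atBot := by
        have := tendsto_neg_atTop_atBot.comp h2
        apply this.congr
        intro t
        show -(c * d i * t) = -(c * t) * d i
        ring
      exact Real.tendsto_exp_atBot.comp h3
    have hcont : Continuous (fun v : Fin N → ℝ => U * diagonal v * star U) :=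
      (continuous_const.matrix_mul (continuous_id.matrix_diagonal)).matrix_mul continuous_const
    have h4 := (hcont.tendsto (0 : Fin N → ℝ)).comp hdiag
    have h0 : U * diagonal (0 : Fin N → ℝ) * star U = 0 := by
      have hz : diagonal (0 : Fin N → ℝ) = 0 := diagonal_zero
      rw [hz, mul_zero, zero_mul]
    rw [h0] at h4
    apply h4.congr
    intro t
    rw [hexp t]
    rfl
  -- final assembly
  have hmain : Tendsto (fun t : ℝ =>
      ((1 : Matrix (Fin N) (Fin N) ℝ) - NormedSpace.exp ((-(c * t)) • A)) * A⁻¹ * K) atTop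
      (nhds (K * A⁻¹)) := by
    have h1 : Tendsto (fun t : ℝ =>
        ((1 : Matrix (Fin N) (Fin N) ℝ) - NormedSpace.exp ((-(c * t)) • A))) atTop
        (nhds (1 : Matrix (Fin N) (Fin N) ℝ)) := by
      have h6 := tendsto_const_nhds (x := (1 : Matrix (Fin N) (Fin N) ℝ)) (f := atTop (α := ℝ))
      have h7 := h6.sub hE
      rw [sub_zero] at h7
      exact h7
    have h2 := (h1.mul (tendsto_const_nhds (x := A⁻¹))).mul (tendsto_const_nhds (x := K))
    rw [one_mul, hcomm] at h2
    exact h2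
  have hcont2 : Continuous (fun M : Matrix (Fin N) (Fin N) ℝ => f₀ + M *ᵥ (y - f₀)) :=
    continuous_const.add (continuous_id.matrix_mulVec continuous_const)
  have h5 := (hcont2.tendsto (K * A⁻¹)).comp hmain
  apply h5.congr
  intro t
  rw [hf t]
  rfl
end

section
/- Let N, m be positive integers, K a real symmetric positive semidefinite N×N matrix, K' a real m×N matrix, f₀, y ∈ ℝ^N, f₀' ∈ ℝ^m, α > 0, β > 0. Let f(t) = f₀ + (I_N − exp(−(2α/N)·t·(K + Nβ·I_N)))·(K + Nβ·I_N)⁻¹ K (y − f₀) be the training-data solution, and suppose g : ℝ → ℝ^m is differentiable with g(0) = f₀' and satisfies the test-point dynamics g'(t) = −(2α/N)·[Nβ·g(t) + K'(f(t) − y) − Nβ·f₀'] for all t ≥ 0. Then g(t) converges as t → ∞ to f₀' + K'(K + Nβ·I_N)⁻¹(y − f₀). -/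
open Matrix Filter

section Aux

private lemma HasDerivAt.matrix_mulVec {n p : ℕ} (M : Matrix (Fin p) (Fin n) ℝ)
    {w : ℝ → Fin n → ℝ} {w' : Fin n → ℝ} {t : ℝ} (h : HasDerivAt w w' t) :
    HasDerivAt (fun s => M *ᵥ w s) (M *ᵥ w') t := by
  exact (LinearMap.toContinuousLinearMap (Matrix.mulVecLin M)).hasFDerivAt.comp_hasDerivAt t h

private lemma HasDerivAt.pi_comp {n : ℕ} {w : ℝ → Fin n → ℝ} {w' : Fin n → ℝ} {t : ℝ}
    (h : HasDerivAt w w' t) (i : Fin n) :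
    HasDerivAt (fun s => w s i) (w' i) t := by
  exact (ContinuousLinearMap.proj (R := ℝ) (φ := fun _ : Fin n => ℝ) i).hasFDerivAt.comp_hasDerivAt t h

private lemma hasDerivAt_exp_mulVec {n : ℕ} (A : Matrix (Fin n) (Fin n) ℝ)
    (v : Fin n → ℝ) (c t : ℝ) :
    HasDerivAt (fun s : ℝ => NormedSpace.exp ((-(c * s)) • A) *ᵥ v)
      ((-c) • (A *ᵥ (NormedSpace.exp ((-(c * t)) • A) *ᵥ v))) t := by
  letI : SeminormedRing (Matrix (Fin n) (Fin n) ℝ) := Matrix.linftyOpSemiNormedRing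
  letI : NormedRing (Matrix (Fin n) (Fin n) ℝ) := Matrix.linftyOpNormedRing
  letI : NormedAlgebra ℝ (Matrix (Fin n) (Fin n) ℝ) := Matrix.linftyOpNormedAlgebra
  have key : ∀ s : ℝ, (-(c * s)) • A = s • ((-c) • A) := by
    intro s; rw [smul_smul]; ring_nf
  have h := hasDerivAt_exp_smul_const' ((-c) • A) t
  let L : Matrix (Fin n) (Fin n) ℝ →L[ℝ] (Fin n → ℝ) :=
    LinearMap.toContinuousLinearMap
      { toFun := fun M => M *ᵥ v,
        map_add' := fun M M' => Matrix.add_mulVec M M' v,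
        map_smul' := fun c M => Matrix.smul_mulVec c M v }
  have h2 : HasDerivAt (fun s : ℝ => NormedSpace.exp (s • ((-c) • A)) *ᵥ v)
      (((-c) • A * NormedSpace.exp (t • ((-c) • A))) *ᵥ v) t :=
    L.hasFDerivAt.comp_hasDerivAt t h
  simp only [← key] at h2
  convert h2 using 1
  rw [Matrix.smul_mul, Matrix.smul_mulVec, Matrix.mulVec_mulVec]

end Aux

set_option maxHeartbeats 1000000 in
/-- Test-point gradient-flow dynamics: given the training-data solution `f(t)`, the test
predictions `g(t)` converge, as `t → ∞`, to the NTK-GP posterior mean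
`f₀' + K'(K + Nβ I)⁻¹(y − f₀)` at the test inputs. -/
theorem test_dynamics_tendsto_posterior_mean
    (N m : ℕ) (hN : 0 < N) (hm : 0 < m)
    (K : Matrix (Fin N) (Fin N) ℝ) (hKsymm : K.IsSymm) (hKpsd : K.PosSemidef)
    (K' : Matrix (Fin m) (Fin N) ℝ)
    (f₀ y : Fin N → ℝ) (f₀' : Fin m → ℝ) (α β : ℝ) (hα : 0 < α) (hβ : 0 < β)
    (f : ℝ → (Fin N → ℝ))
    (hf : ∀ t : ℝ, f t = f₀ +
      (((1 : Matrix (Fin N) (Fin N) ℝ)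
          - NormedSpace.exp ((-(2 * α / (N : ℝ) * t))
              • (K + ((N : ℝ) * β) • (1 : Matrix (Fin N) (Fin N) ℝ))))
        * (K + ((N : ℝ) * β) • (1 : Matrix (Fin N) (Fin N) ℝ))⁻¹ * K) *ᵥ (y - f₀))
    (g : ℝ → (Fin m → ℝ))
    (hg0 : g 0 = f₀')
    (hgdiff : Differentiable ℝ g)
    (hode : ∀ t : ℝ, 0 ≤ t →
      HasDerivAt g
        ((-(2 * α / (N : ℝ))) •
          (((N : ℝ) * β) • g t + K' *ᵥ (f t - y) - ((N : ℝ) * β) • f₀')) t) :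
    Tendsto g atTop
      (nhds (f₀'
        + (K' * (K + ((N : ℝ) * β) • (1 : Matrix (Fin N) (Fin N) ℝ))⁻¹) *ᵥ (y - f₀))) := by
  set c : ℝ := 2 * α / (N : ℝ) with hc_def
  set lam : ℝ := (N : ℝ) * β with hlam_def
  set A : Matrix (Fin N) (Fin N) ℝ := K + lam • 1 with hA_def
  set v : Fin N → ℝ := y - f₀ with hv_def
  have hNpos : (0 : ℝ) < N := by exact_mod_cast hN
  have hc : 0 < c := by positivity
  have hlam : 0 < lam := by positivity
  have hApd : A.PosDef := by
    refine Matrix.PosDef.posSemidef_add hKpsd ?_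
    rw [Matrix.smul_one_eq_diagonal]
    exact Matrix.PosDef.diagonal fun _ => hlam
  have hAdet : IsUnit A.det := (Matrix.isUnit_iff_isUnit_det A).mp hApd.isUnit
  have hAinvA : A⁻¹ * A = 1 := Matrix.nonsing_inv_mul A hAdet
  have hAAinv : A * A⁻¹ = 1 := Matrix.mul_nonsing_inv A hAdet
  set E : ℝ → Matrix (Fin N) (Fin N) ℝ :=
    fun t => NormedSpace.exp ((-(c * t)) • A) with hE_def
  have hE0 : E 0 = 1 := by
    simp [hE_def, NormedSpace.exp_zero]
  have hcommAE : ∀ t, A * E t = E t * A := by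
    intro t
    letI : SeminormedRing (Matrix (Fin N) (Fin N) ℝ) := Matrix.linftyOpSemiNormedRing
    letI : NormedRing (Matrix (Fin N) (Fin N) ℝ) := Matrix.linftyOpNormedRing
    letI : NormedAlgebra ℝ (Matrix (Fin N) (Fin N) ℝ) := Matrix.linftyOpNormedAlgebra
    exact (((Commute.refl A).smul_right (-(c * t))).exp_right)
  have hcommAinvE : ∀ t, A⁻¹ * E t = E t * A⁻¹ := by
    intro t
    calc A⁻¹ * E t = A⁻¹ * E t * (A * A⁻¹) := by rw [hAAinv, mul_one]
      _ = A⁻¹ * (E t * A) * A⁻¹ := by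
          rw [Matrix.mul_assoc, Matrix.mul_assoc, Matrix.mul_assoc]
      _ = A⁻¹ * (A * E t) * A⁻¹ := by rw [← hcommAE]
      _ = (A⁻¹ * A) * E t * A⁻¹ := by rw [Matrix.mul_assoc A⁻¹ A (E t)]
      _ = E t * A⁻¹ := by rw [hAinvA, Matrix.one_mul]
  have hAinvK : A⁻¹ * K = 1 - lam • A⁻¹ := by
    have hK : K = A - lam • 1 := by rw [hA_def]; abel
    nth_rewrite 1 [hK]
    rw [Matrix.mul_sub, hAinvA, Matrix.mul_smul, Matrix.mul_one]
  have hmat : ∀ t, lam • (K' * A⁻¹) - lam • (K' * A⁻¹ * E t)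
      + K' * ((1 - E t) * A⁻¹ * K) - K' = -(K' * E t) := by
    intro t
    have hstep : (1 - E t) * A⁻¹ * K = (1 - lam • A⁻¹) - E t * (1 - lam • A⁻¹) := by
      rw [Matrix.sub_mul, Matrix.sub_mul, Matrix.one_mul,
        Matrix.mul_assoc (E t) A⁻¹ K, hAinvK]
    rw [hstep]
    rw [Matrix.mul_sub K', Matrix.mul_sub K', Matrix.mul_one, Matrix.mul_smul,
      Matrix.mul_sub (E t), Matrix.mul_one, Matrix.mul_smul, Matrix.mul_sub K',
      Matrix.mul_smul, ← hcommAinvE t, ← Matrix.mul_assoc K' A⁻¹ (E t)]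
    abel
  set gstar : Fin m → ℝ := f₀' + (K' * A⁻¹) *ᵥ v with hgstar_def
  set G : ℝ → Fin m → ℝ := fun t => gstar - (K' * A⁻¹) *ᵥ (E t *ᵥ v) with hG_def
  set u : ℝ → Fin N → ℝ := fun t => E t *ᵥ v with hu_def
  have hu_deriv : ∀ t, HasDerivAt u ((-c) • (A *ᵥ u t)) t := by
    intro t; exact hasDerivAt_exp_mulVec A v c t
  have hu_cont : Continuous u :=
    continuous_iff_continuousAt.mpr fun t => (hu_deriv t).continuousAt
  have hG0 : G 0 = f₀' := by
    rw [hG_def]; simp only [hE0, Matrix.one_mulVec, hgstar_def]; abel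
  have hRHS : ∀ t, lam • G t + K' *ᵥ (f t - y) - lam • f₀' = -(K' *ᵥ u t) := by
    intro t
    have hfy : f t - y = ((1 - E t) * A⁻¹ * K) *ᵥ v - v := by
      rw [hf t, hv_def]; abel
    calc lam • G t + K' *ᵥ (f t - y) - lam • f₀'
        = (lam • (K' * A⁻¹) - lam • (K' * A⁻¹ * E t)
            + K' * ((1 - E t) * A⁻¹ * K) - K') *ᵥ v := by
          rw [hfy, hG_def, hgstar_def]
          simp only [Matrix.mulVec_sub, Matrix.sub_mulVec, Matrix.add_mulVec,
            Matrix.smul_mulVec, Matrix.mulVec_mulVec, smul_add, smul_sub]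
          abel
      _ = (-(K' * E t)) *ᵥ v := by rw [hmat t]
      _ = -(K' *ᵥ u t) := by
          rw [Matrix.neg_mulVec, hu_def]; simp only [Matrix.mulVec_mulVec]
  have hG_deriv : ∀ t, HasDerivAt G
      ((-c) • (lam • G t + K' *ᵥ (f t - y) - lam • f₀')) t := by
    intro t
    have h1 : HasDerivAt (fun s => (K' * A⁻¹) *ᵥ u s) ((K' * A⁻¹) *ᵥ ((-c) • (A *ᵥ u t))) t :=
      (hu_deriv t).matrix_mulVec (K' * A⁻¹)
    have h2 : HasDerivAt G (-((K' * A⁻¹) *ᵥ ((-c) • (A *ᵥ u t)))) t := by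
      simpa using (h1.const_sub gstar)
    have h3 : (K' * A⁻¹) *ᵥ ((-c) • (A *ᵥ u t)) = (-c) • (K' *ᵥ u t) := by
      rw [Matrix.mulVec_smul, Matrix.mulVec_mulVec, Matrix.mul_assoc, hAinvA, Matrix.mul_one]
    rw [h3] at h2
    rw [hRHS t, smul_neg]
    exact h2
  have hG_cont : Continuous G := by
    rw [hG_def]
    exact continuous_const.sub
      ((LinearMap.toContinuousLinearMap (Matrix.mulVecLin (K' * A⁻¹))).continuous.comp hu_cont)
  -- uniqueness on [0, ∞)
  have hgG : ∀ t : ℝ, 0 ≤ t → g t = G t := by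
    set D : ℝ → Fin m → ℝ := fun t => g t - G t with hD_def
    set φ : ℝ → Fin m → ℝ := fun t => Real.exp (c * lam * t) • D t with hφ_def
    have hDderiv : ∀ t : ℝ, 0 ≤ t → HasDerivAt D ((-(c * lam)) • D t) t := by
      intro t ht
      have h := (hode t ht).sub (hG_deriv t)
      have key : (-c) • (lam • g t + K' *ᵥ (f t - y) - lam • f₀')
          - (-c) • (lam • G t + K' *ᵥ (f t - y) - lam • f₀')
          = (-(c * lam)) • (g t - G t) := by
        have h1 : ∀ (a b w z : Fin m → ℝ), lam • a + w - z - (lam • b + w - z)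
            = lam • (a - b) := by
          intro a b w z; rw [smul_sub]; abel
        rw [← smul_sub, h1 (g t) (G t) _ _, smul_smul]
        congr 1; ring
      rw [key] at h
      exact h
    have hφderiv : ∀ t : ℝ, 0 ≤ t → HasDerivAt φ 0 t := by
      intro t ht
      have hexp : HasDerivAt (fun s : ℝ => Real.exp (c * lam * s))
          (Real.exp (c * lam * t) * (c * lam)) t := by
        have h1 : HasDerivAt (fun s : ℝ => c * lam * s) (c * lam) t := by
          simpa using (hasDerivAt_id t).const_mul (c * lam)
        exact h1.exp
      have h := hexp.smul (hDderiv t ht)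
      refine HasDerivAt.congr_deriv h ?_
      rw [smul_smul, ← add_smul,
        show Real.exp (c * lam * t) * -(c * lam)
          + Real.exp (c * lam * t) * (c * lam) = 0 from by ring, zero_smul]
    intro T hT
    have hφcont : Continuous φ := by
      rw [hφ_def]
      exact (Real.continuous_exp.comp (continuous_const.mul continuous_id)).smul
        ((hgdiff.continuous).sub hG_cont)
    have hconst := constant_of_has_deriv_right_zero (f := φ) (a := 0) (b := T)
      (hφcont.continuousOn)
      (fun x hx => (hφderiv x hx.1).hasDerivWithinAt)
    have hφT : φ T = φ 0 := hconst T ⟨hT, le_refl T⟩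
    have hφ0 : φ 0 = 0 := by
      rw [hφ_def]
      simp only [mul_zero, Real.exp_zero, one_smul, hD_def, hg0, hG0, sub_self, smul_zero]
    rw [hφ0] at hφT
    have hDT : D T = 0 := by
      rcases smul_eq_zero.mp hφT with h | h
      · exact absurd h (Real.exp_ne_zero _)
      · exact h
    exact sub_eq_zero.mp hDT
  -- convergence of u to 0
  set q : ℝ → ℝ := fun t => ∑ i, (u t i)^2 with hq_def
  have hq_nonneg : ∀ t, 0 ≤ q t := fun t => Finset.sum_nonneg fun i _ => sq_nonneg _
  have hq_deriv : ∀ t, HasDerivAt q (∑ i, 2 * u t i * ((-c) • (A *ᵥ u t)) i) t := by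
    intro t
    have hterm : ∀ i : Fin N, HasDerivAt (fun s => (u s i)^2)
        (2 * u t i * ((-c) • (A *ᵥ u t)) i) t := by
      intro i
      have h := ((hu_deriv t).pi_comp i).pow 2
      refine HasDerivAt.congr_deriv h ?_
      push_cast [pow_one]
      ring
    exact HasDerivAt.fun_sum fun i _ => hterm i
  have hq_bound : ∀ t, (∑ i, 2 * u t i * ((-c) • (A *ᵥ u t)) i) ≤ -(2 * c * lam) * q t := by
    intro t
    have hps : 0 ≤ u t ⬝ᵥ (K *ᵥ u t) := by
      have := hKpsd.dotProduct_mulVec_nonneg (u t); simpa using this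
    have h1 : (∑ i, 2 * u t i * ((-c) • (A *ᵥ u t)) i)
        = (-2 * c) * (u t ⬝ᵥ (A *ᵥ u t)) := by
      simp only [Pi.smul_apply, smul_eq_mul, dotProduct, Finset.mul_sum]
      exact Finset.sum_congr rfl fun i _ => by ring
    have h2 : u t ⬝ᵥ (A *ᵥ u t) = u t ⬝ᵥ (K *ᵥ u t) + lam * q t := by
      rw [hA_def, Matrix.add_mulVec, dotProduct_add, Matrix.smul_mulVec,
        Matrix.one_mulVec, dotProduct_smul, smul_eq_mul]
      have hdq : u t ⬝ᵥ u t = q t := by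
        simp only [dotProduct, hq_def]
        exact Finset.sum_congr rfl fun i _ => (pow_two _).symm
      rw [hdq]
    rw [h1, h2]
    nlinarith [hps, hc.le, mul_nonneg hps hc.le]
  set ψ : ℝ → ℝ := fun t => Real.exp (2 * c * lam * t) * q t with hψ_def
  have hψ_deriv : ∀ t, HasDerivAt ψ
      (Real.exp (2 * c * lam * t) * (2 * c * lam) * q t
        + Real.exp (2 * c * lam * t) * (∑ i, 2 * u t i * ((-c) • (A *ᵥ u t)) i)) t := by
    intro t
    have hexp : HasDerivAt (fun s : ℝ => Real.exp (2 * c * lam * s))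
        (Real.exp (2 * c * lam * t) * (2 * c * lam)) t := by
      have h1 : HasDerivAt (fun s : ℝ => 2 * c * lam * s) (2 * c * lam) t := by
        simpa using (hasDerivAt_id t).const_mul (2 * c * lam)
      exact h1.exp
    exact hexp.mul (hq_deriv t)
  have hψ_anti : Antitone ψ := by
    apply antitone_of_deriv_nonpos
    · exact fun t => (hψ_deriv t).differentiableAt
    · intro t
      rw [(hψ_deriv t).deriv]
      have hb := hq_bound t
      have he : (0:ℝ) < Real.exp (2 * c * lam * t) := Real.exp_pos _
      nlinarith [hq_nonneg t, mul_le_mul_of_nonneg_left hb he.le]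
  have hq_le : ∀ t : ℝ, 0 ≤ t → q t ≤ Real.exp (-(2 * c * lam * t)) * q 0 := by
    intro t ht
    have h : ψ t ≤ ψ 0 := hψ_anti ht
    have hψ0 : ψ 0 = q 0 := by rw [hψ_def]; simp
    have he : (0:ℝ) < Real.exp (2 * c * lam * t) := Real.exp_pos _
    rw [Real.exp_neg, ← div_eq_inv_mul, le_div_iff₀ he]
    calc q t * Real.exp (2 * c * lam * t)
        = ψ t := by rw [hψ_def]; ring
      _ ≤ ψ 0 := h
      _ = q 0 := hψ0
  have hq0 : Tendsto q atTop (nhds 0) := by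
    have hupper : Tendsto (fun t => Real.exp (-(2 * c * lam * t)) * q 0) atTop (nhds 0) := by
      have h1 : Tendsto (fun t : ℝ => 2 * c * lam * t) atTop atTop :=
        Tendsto.const_mul_atTop (by positivity) tendsto_id
      have h2 : Tendsto (fun t : ℝ => Real.exp (-(2 * c * lam * t))) atTop (nhds 0) :=
        Real.tendsto_exp_neg_atTop_nhds_zero.comp h1
      simpa using h2.mul_const (q 0)
    refine tendsto_of_tendsto_of_tendsto_of_le_of_le' tendsto_const_nhds hupper ?_ ?_
    · exact Eventually.of_forall hq_nonneg
    · filter_upwards [eventually_ge_atTop (0:ℝ)] with t ht using hq_le t ht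
  have hu0 : Tendsto u atTop (nhds 0) := by
    rw [tendsto_pi_nhds]
    intro i
    rw [Pi.zero_apply]
    have hsq : Tendsto (fun t => Real.sqrt (q t)) atTop (nhds 0) := by
      have := (Real.continuous_sqrt.tendsto 0).comp hq0
      simpa [Real.sqrt_zero, Function.comp_def] using this
    have habs : ∀ t, |u t i| ≤ Real.sqrt (q t) := by
      intro t
      have h1 : (u t i)^2 ≤ q t :=
        Finset.single_le_sum (fun j _ => sq_nonneg (u t j)) (Finset.mem_univ i)
      rw [← Real.sqrt_sq_eq_abs]
      exact Real.sqrt_le_sqrt h1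
    refine tendsto_of_tendsto_of_tendsto_of_le_of_le' (by simpa using hsq.neg) hsq ?_ ?_
    · exact Eventually.of_forall fun t => neg_le_of_abs_le (habs t)
    · exact Eventually.of_forall fun t => le_of_abs_le (habs t)
  have hGlim : Tendsto G atTop (nhds gstar) := by
    have hL : Tendsto (fun t => (K' * A⁻¹) *ᵥ u t) atTop (nhds 0) := by
      have hcont : Continuous fun x : Fin N → ℝ => (K' * A⁻¹) *ᵥ x :=
        (LinearMap.toContinuousLinearMap (Matrix.mulVecLin (K' * A⁻¹))).continuous
      have := (hcont.tendsto 0).comp hu0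
      simpa [Function.comp_def] using this
    have := (tendsto_const_nhds (x := gstar) (f := atTop)).sub hL
    simpa using this
  have hfinal : Tendsto g atTop (nhds gstar) := by
    refine hGlim.congr' ?_
    filter_upwards [eventually_ge_atTop (0:ℝ)] with t ht
    exact (hgG t ht).symm
  simpa [hgstar_def] using hfinal
end

section
/- Let N, m be positive integers and σ > 0. Let A be a real symmetric positive semidefinite N×N matrix, D a real symmetric positive semidefinite m×m matrix, and B a real N×m matrix such that the (N+m)×(N+m) block matrix [[A, B], [Bᵀ, D]] is positive semidefinite. Then the operator norm satisfies ‖σ²·Bᵀ(A + σ²·I_N)⁻²B‖ ≤ (1/4)·λ_max(D), where λ_max(D) denotes the largest eigenvalue of D. -/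
open Matrix
open scoped Matrix.Norms.L2Operator

lemma rayleigh_aux (m : ℕ) (hm : 0 < m) (D : Matrix (Fin m) (Fin m) ℝ) (hD : D.PosSemidef)
    (v : Fin m → ℝ) :
    v ⬝ᵥ D *ᵥ v ≤ (⨆ i, hD.1.eigenvalues i) * (v ⬝ᵥ v) := by
  classical
  have : Nonempty (Fin m) := ⟨⟨0, hm⟩⟩
  set hH := hD.1 with hHdef
  set U : Matrix (Fin m) (Fin m) ℝ := (hH.eigenvectorUnitary : Matrix (Fin m) (Fin m) ℝ) with hU
  have hUmem : U ∈ unitary (Matrix (Fin m) (Fin m) ℝ) := hH.eigenvectorUnitary.2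
  have hU1 : U * star U = 1 := hUmem.2
  set w : Fin m → ℝ := (star U) *ᵥ v with hw
  have hdot : ∀ y : Fin m → ℝ, v ⬝ᵥ (U *ᵥ y) = w ⬝ᵥ y := by
    intro y
    rw [dotProduct_mulVec]
    congr 1
    rw [hw]
    simp only [star_eq_conjTranspose, conjTranspose_eq_transpose_of_trivial]
    rw [mulVec_transpose]
  have key : v ⬝ᵥ D *ᵥ v = ∑ i, hH.eigenvalues i * (w i)^2 := by
    conv_lhs => rw [hH.spectral_theorem, Unitary.conjStarAlgAut_apply, ← hU]
    rw [← mulVec_mulVec, ← mulVec_mulVec, hdot]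
    simp [dotProduct, mulVec_diagonal]
    exact Finset.sum_congr rfl fun i _ => by ring
  have hnorm : w ⬝ᵥ w = v ⬝ᵥ v := by
    rw [← hdot w, hw, mulVec_mulVec, hU1, one_mulVec]
  rw [key, ← hnorm]
  have hbdd : BddAbove (Set.range hH.eigenvalues) := Set.Finite.bddAbove (Set.finite_range _)
  have hle : ∀ i, hH.eigenvalues i ≤ ⨆ j, hH.eigenvalues j := fun i => le_ciSup hbdd i
  calc ∑ i, hH.eigenvalues i * (w i)^2
      ≤ ∑ i, (⨆ j, hH.eigenvalues j) * (w i)^2 :=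
        Finset.sum_le_sum fun i _ => mul_le_mul_of_nonneg_right (hle i) (sq_nonneg _)
    _ = (⨆ j, hH.eigenvalues j) * (w ⬝ᵥ w) := by
        rw [← Finset.mul_sum]; congr 1; simp [dotProduct, sq]

lemma block_cs (N m : ℕ) (A : Matrix (Fin N) (Fin N) ℝ) (D : Matrix (Fin m) (Fin m) ℝ)
    (B : Matrix (Fin N) (Fin m) ℝ)
    (hBlock : (Matrix.fromBlocks A B Bᵀ D).PosSemidef)
    (x : Fin N → ℝ) (v : Fin m → ℝ) :
    (x ⬝ᵥ B *ᵥ v)^2 ≤ (x ⬝ᵥ A *ᵥ x) * (v ⬝ᵥ D *ᵥ v) := by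
  have h : ∀ t : ℝ, 0 ≤ (x ⬝ᵥ A *ᵥ x) * (t * t) + (2 * (x ⬝ᵥ B *ᵥ v)) * t + (v ⬝ᵥ D *ᵥ v) := by
    intro t
    have h0 := hBlock.dotProduct_mulVec_nonneg (Sum.elim (t • x) v)
    rw [fromBlocks_mulVec] at h0
    simp only [star_trivial, sumElim_dotProduct_sumElim, dotProduct_add, smul_dotProduct,
      mulVec_smul, dotProduct_smul, smul_eq_mul, Sum.elim_comp_inl, Sum.elim_comp_inr] at h0
    have hBt : v ⬝ᵥ Bᵀ *ᵥ x = x ⬝ᵥ B *ᵥ v := by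
      rw [mulVec_transpose, dotProduct_mulVec, dotProduct_comm]
    rw [hBt] at h0
    nlinarith [h0]
  have hd := discrim_le_zero h
  rw [discrim] at hd
  nlinarith [hd]

/-- At arbitrary test points, the gap of the truncation-free covariance estimate satisfies
`‖σ² Bᵀ(A + σ² I)⁻² B‖ ≤ (1/4) λ_max(D)` (spectral norm), where `[[A, B], [Bᵀ, D]]` is
positive semidefinite. -/
theorem covariance_gap_opNorm_bound
    (N m : ℕ) (hN : 0 < N) (hm : 0 < m) (σ : ℝ) (hσ : 0 < σ)
    (A : Matrix (Fin N) (Fin N) ℝ) (hA : A.PosSemidef) (hAsymm : A.IsSymm)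
    (D : Matrix (Fin m) (Fin m) ℝ) (hD : D.PosSemidef) (hDsymm : D.IsSymm)
    (B : Matrix (Fin N) (Fin m) ℝ)
    (hBlock : (Matrix.fromBlocks A B Bᵀ D).PosSemidef) :
    ‖σ ^ 2 • (Bᵀ * (A + σ ^ 2 • (1 : Matrix (Fin N) (Fin N) ℝ))⁻¹
        * (A + σ ^ 2 • (1 : Matrix (Fin N) (Fin N) ℝ))⁻¹ * B)‖
      ≤ (1 / 4) * ⨆ i : Fin m, hD.1.eigenvalues i := by
  classical
  have hmne : Nonempty (Fin m) := ⟨⟨0, hm⟩⟩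
  set S : Matrix (Fin N) (Fin N) ℝ := A + σ^2 • (1 : Matrix (Fin N) (Fin N) ℝ) with hS
  have hsmulpd : (σ^2 • (1 : Matrix (Fin N) (Fin N) ℝ)).PosDef := by
    refine Matrix.PosDef.of_dotProduct_mulVec_pos ?_ fun x hx => ?_
    · simp [Matrix.IsHermitian, conjTranspose_smul]
    · simp only [smul_mulVec, one_mulVec, dotProduct_smul, smul_eq_mul, star_trivial]
      have hxx : 0 < x ⬝ᵥ x := by
        have := Matrix.dotProduct_star_self_pos_iff (v := x) |>.2 hx
        simpa using this
      positivity
  have hSpd : S.PosDef := Matrix.PosDef.posSemidef_add hA hsmulpd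
  have hdet : IsUnit S.det := hSpd.det_pos.ne'.isUnit
  have hSinv : S * S⁻¹ = 1 := Matrix.mul_nonsing_inv S hdet
  have hSsymm : Sᵀ = S := by
    have := hSpd.isHermitian
    rwa [Matrix.IsHermitian, conjTranspose_eq_transpose_of_trivial] at this
  have hXs : (S⁻¹)ᵀ = S⁻¹ := by rw [Matrix.transpose_nonsing_inv, hSsymm]
  -- scalar bound
  have scalar_bound : ∀ v : Fin m → ℝ,
      σ^2 * ((S⁻¹ *ᵥ (B *ᵥ v)) ⬝ᵥ (S⁻¹ *ᵥ (B *ᵥ v))) ≤ (1/4) * (v ⬝ᵥ D *ᵥ v) := by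
    intro v
    set w : Fin N → ℝ := S⁻¹ *ᵥ (B *ᵥ v) with hw
    have hSw : S *ᵥ w = B *ᵥ v := by
      rw [hw, mulVec_mulVec, hSinv, one_mulVec]
    have hb : w ⬝ᵥ B *ᵥ v = w ⬝ᵥ A *ᵥ w + σ^2 * (w ⬝ᵥ w) := by
      rw [← hSw, hS]
      simp [add_mulVec, dotProduct_add, smul_mulVec, one_mulVec]
    have hcs := block_cs N m A D B hBlock w v
    have ha : 0 ≤ w ⬝ᵥ A *ᵥ w := by simpa using hA.dotProduct_mulVec_nonneg w
    have hd : 0 ≤ v ⬝ᵥ D *ᵥ v := by simpa using hD.dotProduct_mulVec_nonneg v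
    have hww : 0 ≤ w ⬝ᵥ w := by
      have := dotProduct_star_self_nonneg w
      simpa using this
    have hs : 0 ≤ σ^2 * (w ⬝ᵥ w) := by positivity
    rw [hb] at hcs
    set a := w ⬝ᵥ A *ᵥ w
    set s := σ^2 * (w ⬝ᵥ w)
    set d := v ⬝ᵥ D *ᵥ v
    rcases ha.eq_or_lt with h0 | hpos
    · nlinarith [hcs]
    · nlinarith [hcs, sq_nonneg (a - s)]
  -- λmax ≥ 0 and K
  set lam : ℝ := ⨆ i : Fin m, hD.1.eigenvalues i with hlam
  have hlam0 : 0 ≤ lam := by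
    have := hD.eigenvalues_nonneg (⟨0, hm⟩ : Fin m)
    exact le_trans this (le_ciSup (Set.Finite.bddAbove (Set.finite_range _)) _)
  have hK : 0 ≤ (1/4) * lam := by positivity
  set C : Matrix (Fin N) (Fin m) ℝ := σ • (S⁻¹ * B) with hC
  have hMC : σ^2 • (Bᵀ * S⁻¹ * S⁻¹ * B) = Cᴴ * C := by
    simp [hC, conjTranspose_smul, Matrix.smul_mul, Matrix.mul_smul, conjTranspose_mul,
      conjTranspose_eq_transpose_of_trivial, hXs, smul_smul, star_trivial, Matrix.mul_assoc, sq]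
  rw [hMC, l2_opNorm_conjTranspose_mul_self]
  -- norm of (WithLp.equiv _).symm y
  have hnorm_eq : ∀ y : Fin N → ℝ,
      ‖(WithLp.equiv 2 (Fin N → ℝ)).symm y‖ = Real.sqrt (y ⬝ᵥ y) := by
    intro y
    rw [EuclideanSpace.norm_eq]
    congr 1
    simp [dotProduct, Real.norm_eq_abs, sq_abs, sq]
  have hnorm_eq' : ∀ y : Fin m → ℝ,
      ‖(WithLp.equiv 2 (Fin m → ℝ)).symm y‖ = Real.sqrt (y ⬝ᵥ y) := by
    intro y
    rw [EuclideanSpace.norm_eq]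
    congr 1
    simp [dotProduct, Real.norm_eq_abs, sq_abs, sq]
  have hCnorm : ‖C‖ ≤ Real.sqrt ((1/4) * lam) := by
    rw [Matrix.l2_opNorm_def]
    apply ContinuousLinearMap.opNorm_le_bound _ (Real.sqrt_nonneg _)
    intro x
    set v : Fin m → ℝ := WithLp.equiv 2 (Fin m → ℝ) x with hv
    have hx : x = (WithLp.equiv 2 (Fin m → ℝ)).symm v := rfl
    have happ : (LinearEquiv.trans toEuclideanLin
        LinearMap.toContinuousLinearMap C) x
        = (WithLp.equiv 2 (Fin N → ℝ)).symm (C *ᵥ v) := rfl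
    rw [happ, hnorm_eq, hx, hnorm_eq']
    have hCv : (C *ᵥ v) ⬝ᵥ (C *ᵥ v) = σ^2 * ((S⁻¹ *ᵥ (B *ᵥ v)) ⬝ᵥ (S⁻¹ *ᵥ (B *ᵥ v))) := by
      rw [hC, smul_mulVec, smul_dotProduct, dotProduct_smul, ← mulVec_mulVec]
      simp [smul_eq_mul, sq]
      ring
    rw [hCv]
    rw [← Real.sqrt_mul hK]
    apply Real.sqrt_le_sqrt
    calc σ^2 * ((S⁻¹ *ᵥ (B *ᵥ v)) ⬝ᵥ (S⁻¹ *ᵥ (B *ᵥ v))) ≤ (1/4) * (v ⬝ᵥ D *ᵥ v) :=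
          scalar_bound v
      _ ≤ (1/4) * (lam * (v ⬝ᵥ v)) := by
          have := rayleigh_aux m hm D hD v
          linarith
      _ = (1/4) * lam * (v ⬝ᵥ v) := by ring
  calc ‖C‖ * ‖C‖ ≤ Real.sqrt ((1/4)*lam) * Real.sqrt ((1/4)*lam) :=
        mul_le_mul hCnorm hCnorm (norm_nonneg _) (Real.sqrt_nonneg _)
    _ = (1/4) * lam := Real.mul_self_sqrt hK
end
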